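/- arXiv:1512.04860 — 10 statements merged into one kernel-verified Lean document; each statement's English description precedes it below -/
import Mathlib

section
/- The consistent Bellman operator T_C, defined by T_C Q(x,a) := R(x,a) + γ E_{x'~P(·|x,a)}[1{x'≠x} max_b Q(x',b) + 1{x'=x} Q(x,a)], is a γ-contraction in supremum norm on the space of Q-functions over a finite MDP. -/
/-- The consistent Bellman operator
`T_C Q(x,a) = R(x,a) + γ Σ_{x'} P(x'|x,a) (1{x'≠x} max_b Q(x',b) + 1{x'=x} Q(x,a))`
is a `γ`-contraction in supremum norm on Q-functions over a finite MDP. -/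
theorem consistent_bellman_operator_contraction
    {X A : Type*} [Fintype X] [Fintype A] [Nonempty X] [Nonempty A] [DecidableEq X]
    (P : X → A → X → ℝ) (hP0 : ∀ x a x', 0 ≤ P x a x')
    (hP1 : ∀ x a, ∑ x', P x a x' = 1)
    (R : X → A → ℝ) (γ : ℝ) (hγ0 : 0 ≤ γ) (hγ1 : γ < 1)
    (TC : (X → A → ℝ) → (X → A → ℝ))
    (hTC : ∀ Q x a, TC Q x a =
      R x a + γ * ∑ x', P x a x' * (if x' = x then Q x a else ⨆ b, Q x' b))
    (Q₁ Q₂ : X → A → ℝ) :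
    (⨆ p : X × A, |TC Q₁ p.1 p.2 - TC Q₂ p.1 p.2|) ≤
      γ * ⨆ p : X × A, |Q₁ p.1 p.2 - Q₂ p.1 p.2| := by
  set M := ⨆ p : X × A, |Q₁ p.1 p.2 - Q₂ p.1 p.2| with hMdef
  have hQM : ∀ x a, |Q₁ x a - Q₂ x a| ≤ M := fun x a =>
    le_ciSup (f := fun p : X × A => |Q₁ p.1 p.2 - Q₂ p.1 p.2|)
      ((Set.finite_range _).bddAbove) ((x, a) : X × A)
  have hsup : ∀ x : X, |(⨆ b, Q₁ x b) - ⨆ b, Q₂ x b| ≤ M := by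
    intro x
    rw [abs_sub_le_iff]
    constructor
    · rw [sub_le_iff_le_add]
      refine ciSup_le fun b => ?_
      have h1 := (abs_le.mp (hQM x b)).2
      have h2 : Q₂ x b ≤ ⨆ b, Q₂ x b := le_ciSup ((Set.finite_range _).bddAbove) b
      linarith
    · rw [sub_le_iff_le_add]
      refine ciSup_le fun b => ?_
      have h1 := (abs_le.mp (hQM x b)).1
      have h2 : Q₁ x b ≤ ⨆ b, Q₁ x b := le_ciSup ((Set.finite_range _).bddAbove) b
      linarith
  refine ciSup_le fun p => ?_
  obtain ⟨x, a⟩ := p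
  have key : TC Q₁ x a - TC Q₂ x a
      = γ * ∑ x', P x a x' *
        ((if x' = x then Q₁ x a else ⨆ b, Q₁ x' b)
          - (if x' = x then Q₂ x a else ⨆ b, Q₂ x' b)) := by
    rw [hTC, hTC]
    rw [show ∀ s t : ℝ, R x a + γ * s - (R x a + γ * t) = γ * (s - t) from fun s t => by ring]
    rw [← Finset.sum_sub_distrib]
    congr 1
    refine Finset.sum_congr rfl fun x' _ => by ring
  rw [key, abs_mul, abs_of_nonneg hγ0]
  refine mul_le_mul_of_nonneg_left ?_ hγ0
  calc |∑ x', P x a x' *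
        ((if x' = x then Q₁ x a else ⨆ b, Q₁ x' b)
          - (if x' = x then Q₂ x a else ⨆ b, Q₂ x' b))|
      ≤ ∑ x', |P x a x' *
        ((if x' = x then Q₁ x a else ⨆ b, Q₁ x' b)
          - (if x' = x then Q₂ x a else ⨆ b, Q₂ x' b))| := Finset.abs_sum_le_sum_abs _ _
    _ ≤ ∑ x', P x a x' * M := by
        refine Finset.sum_le_sum fun x' _ => ?_
        rw [abs_mul, abs_of_nonneg (hP0 x a x')]
        refine mul_le_mul_of_nonneg_left ?_ (hP0 x a x')
        by_cases h : x' = x <;> simp [h]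
        · exact hQM x a
        · exact hsup x'
    _ = M := by rw [← Finset.sum_mul, hP1, one_mul]
end

section
/- The unique fixed point Q̃ of the consistent Bellman operator T_C satisfies max_a Q̃(x,a) = max_a Q*(x,a) = V*(x) for every state x. -/
/-- The unique fixed point `Q̃` of the consistent Bellman operator satisfies
`max_a Q̃(x,a) = max_a Q*(x,a) = V*(x)` for every state `x`, where `Q*` is the
fixed point of the standard Bellman operator and `V*` the optimal value
function. -/
theorem consistent_fixed_point_optimal_value
    {X A : Type*} [Fintype X] [Fintype A] [Nonempty X] [Nonempty A] [DecidableEq X]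
    (P : X → A → X → ℝ) (hP0 : ∀ x a x', 0 ≤ P x a x')
    (hP1 : ∀ x a, ∑ x', P x a x' = 1)
    (R : X → A → ℝ) (γ : ℝ) (hγ0 : 0 ≤ γ) (hγ1 : γ < 1)
    (Qstar : X → A → ℝ)
    (hQstar : ∀ x a, Qstar x a =
      R x a + γ * ∑ x', P x a x' * (⨆ b, Qstar x' b))
    (Vstar : X → ℝ) (hVstar : ∀ x, Vstar x = ⨆ a, Qstar x a)
    (Qt : X → A → ℝ)
    (hQt : ∀ x a, Qt x a =
      R x a + γ * ∑ x', P x a x' * (if x' = x then Qt x a else ⨆ b, Qt x' b)) :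
    ∀ x, (⨆ a, Qt x a) = Vstar x := by
  classical
  have bddQt : ∀ x, BddAbove (Set.range (Qt x)) := fun x => (Set.finite_range _).bddAbove
  have bddQs : ∀ x, BddAbove (Set.range (Qstar x)) := fun x => (Set.finite_range _).bddAbove
  obtain ⟨x0, hx0⟩ := Finite.exists_max (fun x => |(⨆ a, Qt x a) - Vstar x|)
  set D := |(⨆ a, Qt x0 a) - Vstar x0| with hDdef
  have hD0 : 0 ≤ D := abs_nonneg _
  have hDb : ∀ x, |(⨆ a, Qt x a) - Vstar x| ≤ D := hx0
  have key : ∀ x, |(⨆ a, Qt x a) - Vstar x| ≤ γ * D := by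
    intro x
    -- split sums at x
    have hsplit : ∀ (a : A) (g : X → ℝ), ∑ x', P x a x' * g x'
        = P x a x * g x + ∑ x' ∈ Finset.univ.erase x, P x a x' * g x' := by
      intro a g
      rw [Finset.add_sum_erase Finset.univ (fun x' => P x a x' * g x') (Finset.mem_univ x)]
    have hperase : ∀ a, ∑ x' ∈ Finset.univ.erase x, P x a x' = 1 - P x a x := by
      intro a
      have h := hP1 x a
      rw [← Finset.add_sum_erase Finset.univ (fun x' => P x a x') (Finset.mem_univ x)] at h
      linarith
    have hp1 : ∀ a, P x a x ≤ 1 := by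
      intro a
      have : (0:ℝ) ≤ ∑ x' ∈ Finset.univ.erase x, P x a x' :=
        Finset.sum_nonneg (fun x' _ => hP0 x a x')
      rw [hperase a] at this; linarith
    have h1γp : ∀ a, 0 < 1 - γ * P x a x := by
      intro a
      nlinarith [hP0 x a x, hp1 a, mul_le_mul_of_nonneg_left (hp1 a) hγ0]
    -- the key algebraic identity
    have main : ∀ a, (Qt x a - Qstar x a) * (1 - γ * P x a x)
        = γ * P x a x * (Qstar x a - Vstar x)
          + γ * ∑ x' ∈ Finset.univ.erase x, P x a x' * ((⨆ b, Qt x' b) - Vstar x') := by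
      intro a
      have hQt' : Qt x a = R x a + γ * (P x a x * Qt x a +
          ∑ x' ∈ Finset.univ.erase x, P x a x' * (⨆ b, Qt x' b)) := by
        have h := hQt x a
        rw [hsplit a (fun x' => if x' = x then Qt x a else ⨆ b, Qt x' b)] at h
        rw [if_pos rfl] at h
        rw [Finset.sum_congr rfl (fun x' hx' => by
          rw [if_neg (Finset.ne_of_mem_erase hx')])] at h
        exact h
      have hQs' : Qstar x a = R x a + γ * (P x a x * Vstar x +
          ∑ x' ∈ Finset.univ.erase x, P x a x' * Vstar x') := by
        have h := hQstar x a
        have h2 : ∀ x', (⨆ b, Qstar x' b) = Vstar x' := fun x' => (hVstar x').symm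
        simp only [h2] at h
        rw [hsplit a Vstar] at h
        exact h
      have hS : ∑ x' ∈ Finset.univ.erase x, P x a x' * ((⨆ b, Qt x' b) - Vstar x')
          = (∑ x' ∈ Finset.univ.erase x, P x a x' * (⨆ b, Qt x' b))
            - ∑ x' ∈ Finset.univ.erase x, P x a x' * Vstar x' := by
        rw [← Finset.sum_sub_distrib]
        exact Finset.sum_congr rfl (fun x' _ => by ring)
      rw [hS]
      linear_combination hQt' - hQs'
    -- bound on the sum over x' ≠ x
    have Sub : ∀ a, ∑ x' ∈ Finset.univ.erase x, P x a x' * ((⨆ b, Qt x' b) - Vstar x')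
        ≤ (1 - P x a x) * D := by
      intro a
      calc ∑ x' ∈ Finset.univ.erase x, P x a x' * ((⨆ b, Qt x' b) - Vstar x')
          ≤ ∑ x' ∈ Finset.univ.erase x, P x a x' * D := by
            refine Finset.sum_le_sum (fun x' _ => ?_)
            exact mul_le_mul_of_nonneg_left (le_trans (le_abs_self _) (hDb x')) (hP0 x a x')
        _ = (1 - P x a x) * D := by rw [← Finset.sum_mul, hperase a]
    have Slb : ∀ a, -((1 - P x a x) * D)
        ≤ ∑ x' ∈ Finset.univ.erase x, P x a x' * ((⨆ b, Qt x' b) - Vstar x') := by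
      intro a
      calc -((1 - P x a x) * D) = ∑ x' ∈ Finset.univ.erase x, P x a x' * (-D) := by
            rw [← Finset.sum_mul, hperase a]; ring
        _ ≤ ∑ x' ∈ Finset.univ.erase x, P x a x' * ((⨆ b, Qt x' b) - Vstar x') := by
            refine Finset.sum_le_sum (fun x' _ => ?_)
            refine mul_le_mul_of_nonneg_left ?_ (hP0 x a x')
            have := (abs_le.mp (hDb x')).1; linarith
    -- upper bound: Qt x a ≤ Vstar x + γ D for every a
    have hub : ∀ a, Qt x a ≤ Vstar x + γ * D := by
      intro a
      have hQsV : Qstar x a ≤ Vstar x := by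
        rw [hVstar x]; exact le_ciSup (bddQs x) a
      have h1 := main a
      have h2 : (Qt x a - Qstar x a) * (1 - γ * P x a x) ≤ γ * D * (1 - γ * P x a x) := by
        have hS := Sub a
        have ha : γ * P x a x * (Qstar x a - Vstar x) ≤ 0 :=
          mul_nonpos_of_nonneg_of_nonpos (mul_nonneg hγ0 (hP0 x a x)) (by linarith)
        have hb := mul_le_mul_of_nonneg_left hS hγ0
        have hc : γ * ((1 - P x a x) * D) ≤ γ * D * (1 - γ * P x a x) := by
          nlinarith [mul_nonneg (mul_nonneg hγ0 hD0)
            (mul_nonneg (hP0 x a x) (by linarith : (0:ℝ) ≤ 1 - γ))]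
        linarith [h1]
      have h3 : Qt x a - Qstar x a ≤ γ * D :=
        le_of_mul_le_mul_right h2 (h1γp a)
      linarith
    have hWub : (⨆ a, Qt x a) ≤ Vstar x + γ * D := ciSup_le hub
    -- lower bound via an optimal action
    obtain ⟨astar, hastar⟩ := Finite.exists_max (Qstar x)
    have hVeq : Qstar x astar = Vstar x := by
      rw [hVstar x]
      exact le_antisymm (le_ciSup (bddQs x) astar) (ciSup_le hastar)
    have hlb : Vstar x - γ * D ≤ Qt x astar := by
      have h1 := main astar
      rw [hVeq] at h1
      have h2' : (Qstar x astar - Qt x astar) * (1 - γ * P x astar x)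
          ≤ γ * D * (1 - γ * P x astar x) := by
        have hS := Slb astar
        have hb := mul_le_mul_of_nonneg_left hS hγ0
        have hc : γ * ((1 - P x astar x) * D) ≤ γ * D * (1 - γ * P x astar x) := by
          nlinarith [mul_nonneg (mul_nonneg hγ0 hD0)
            (mul_nonneg (hP0 x astar x) (by linarith : (0:ℝ) ≤ 1 - γ))]
        rw [hVeq]
        linarith [h1]
      have h3 : Qstar x astar - Qt x astar ≤ γ * D :=
        le_of_mul_le_mul_right h2' (h1γp astar)
      linarith
    have hWlb : Vstar x - γ * D ≤ ⨆ a, Qt x a :=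
      le_trans hlb (le_ciSup (bddQt x) astar)
    rw [abs_le]; constructor <;> linarith
  have hDγ : D ≤ γ * D := key x0
  have hDz : D = 0 := by nlinarith
  intro x
  have h := key x
  rw [hDz] at h
  have : |(⨆ a, Qt x a) - Vstar x| = 0 := le_antisymm (by linarith) (abs_nonneg _)
  have := abs_eq_zero.mp this
  linarith [sub_eq_zero.mp this]
end

section
/- The fixed point Q̃ of the consistent Bellman operator satisfies Q̃(x,a) ≤ Q*(x,a) for all (x,a), i.e., the consistent Bellman operator devalues (weakly) every state-action pair relative to the optimal Q-function. -/
/-- The fixed point `Q̃` of the consistent Bellman operator satisfies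
`Q̃(x,a) ≤ Q*(x,a)` for all `(x,a)`: the consistent Bellman operator weakly
devalues every state-action pair relative to the optimal Q-function. -/
theorem consistent_fixed_point_le_Qstar
    {X A : Type*} [Fintype X] [Fintype A] [Nonempty X] [Nonempty A] [DecidableEq X]
    (P : X → A → X → ℝ) (hP0 : ∀ x a x', 0 ≤ P x a x')
    (hP1 : ∀ x a, ∑ x', P x a x' = 1)
    (R : X → A → ℝ) (γ : ℝ) (hγ0 : 0 ≤ γ) (hγ1 : γ < 1)
    (Qstar : X → A → ℝ)
    (hQstar : ∀ x a, Qstar x a =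
      R x a + γ * ∑ x', P x a x' * (⨆ b, Qstar x' b))
    (Qt : X → A → ℝ)
    (hQt : ∀ x a, Qt x a =
      R x a + γ * ∑ x', P x a x' * (if x' = x then Qt x a else ⨆ b, Qt x' b)) :
    ∀ x a, Qt x a ≤ Qstar x a := by
  have bdd : ∀ (f : A → ℝ), BddAbove (Set.range f) := fun f => (Set.finite_range f).bddAbove
  obtain ⟨p, hp⟩ := Finite.exists_max (fun q : X × A => Qt q.1 q.2 - Qstar q.1 q.2)
  set M := Qt p.1 p.2 - Qstar p.1 p.2 with hM
  have hsum : ∀ x', P p.1 p.2 x' *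
      ((if x' = p.1 then Qt p.1 p.2 else ⨆ b, Qt x' b) - (⨆ b, Qstar x' b))
      ≤ P p.1 p.2 x' * M := by
    intro x'
    apply mul_le_mul_of_nonneg_left _ (hP0 _ _ _)
    by_cases hx : x' = p.1
    · rw [if_pos hx, hx]
      have h4 : Qstar p.1 p.2 ≤ ⨆ b, Qstar p.1 b := le_ciSup (bdd _) p.2
      linarith
    · rw [if_neg hx]
      have h3 : (⨆ b, Qt x' b) ≤ M + ⨆ b, Qstar x' b := by
        apply ciSup_le
        intro b
        have h5 := hp (x', b)
        have h6 : Qstar x' b ≤ ⨆ b, Qstar x' b := le_ciSup (bdd _) b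
        simp only at h5
        linarith
      linarith
  have hMeq : M = γ * ∑ x', P p.1 p.2 x' *
      ((if x' = p.1 then Qt p.1 p.2 else ⨆ b, Qt x' b) - (⨆ b, Qstar x' b)) := by
    have hsplit : ∑ x', P p.1 p.2 x' *
        ((if x' = p.1 then Qt p.1 p.2 else ⨆ b, Qt x' b) - (⨆ b, Qstar x' b))
        = (∑ x', P p.1 p.2 x' * (if x' = p.1 then Qt p.1 p.2 else ⨆ b, Qt x' b))
          - ∑ x', P p.1 p.2 x' * (⨆ b, Qstar x' b) := by
      rw [← Finset.sum_sub_distrib]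
      exact Finset.sum_congr rfl (fun x' _ => by ring)
    conv_lhs => rw [hM, hQt p.1 p.2, hQstar p.1 p.2]
    rw [hsplit]
    ring
  have hle : (∑ x', P p.1 p.2 x' *
      ((if x' = p.1 then Qt p.1 p.2 else ⨆ b, Qt x' b) - (⨆ b, Qstar x' b))) ≤ M := by
    calc _ ≤ ∑ x', P p.1 p.2 x' * M := Finset.sum_le_sum (fun x' _ => hsum x')
      _ = (∑ x', P p.1 p.2 x') * M := by rw [Finset.sum_mul]
      _ = M := by rw [hP1]; ring
  have key : M ≤ γ * M := by
    calc M = _ := hMeq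
      _ ≤ γ * M := mul_le_mul_of_nonneg_left hle hγ0
  have hM0 : M ≤ 0 := by nlinarith
  intro x a
  have h7 := hp (x, a)
  simp only at h7
  linarith
end

section
/- For any Q-function Q, the consistent Bellman operator satisfies the sandwich inequalities T Q(x,a) - γ P(x|x,a)[V_Q(x) - Q(x,a)] = T_C Q(x,a) ≤ T Q(x,a), where V_Q(x) = max_b Q(x,b); in particular T_C satisfies the two conditions of the optimality-preservation theorem with α = γ. -/
/-- Sandwich inequalities for the consistent Bellman operator: for every `Q`,
`T_C Q(x,a) = T Q(x,a) - γ P(x|x,a) [V_Q(x) - Q(x,a)] ≤ T Q(x,a)`;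
in particular `T_C` satisfies the two conditions of the optimality-preservation
theorem with `α = γ`. -/
theorem consistent_bellman_sandwich
    {X A : Type*} [Fintype X] [Fintype A] [Nonempty X] [Nonempty A] [DecidableEq X]
    (P : X → A → X → ℝ) (hP0 : ∀ x a x', 0 ≤ P x a x')
    (hP1 : ∀ x a, ∑ x', P x a x' = 1)
    (R : X → A → ℝ) (γ : ℝ) (hγ0 : 0 ≤ γ) (hγ1 : γ < 1)
    (T TC : (X → A → ℝ) → (X → A → ℝ))
    (hT : ∀ Q x a, T Q x a = R x a + γ * ∑ x', P x a x' * (⨆ b, Q x' b))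
    (hTC : ∀ Q x a, TC Q x a =
      R x a + γ * ∑ x', P x a x' * (if x' = x then Q x a else ⨆ b, Q x' b)) :
    ∀ (Q : X → A → ℝ) (x : X) (a : A),
      TC Q x a = T Q x a - γ * P x a x * ((⨆ b, Q x b) - Q x a) ∧
      TC Q x a ≤ T Q x a ∧
      TC Q x a ≥ T Q x a - γ * ((⨆ b, Q x b) - Q x a) := by
  intro Q x a
  have hsum : ∀ x' : X, P x a x' * (if x' = x then Q x a else ⨆ b, Q x' b)
      = P x a x' * (⨆ b, Q x' b)
        - (if x' = x then P x a x * ((⨆ b, Q x b) - Q x a) else 0) := by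
    intro x'
    by_cases h : x' = x <;> simp [h] <;> ring
  have key : TC Q x a = T Q x a - γ * P x a x * ((⨆ b, Q x b) - Q x a) := by
    rw [hTC, hT]
    rw [Finset.sum_congr rfl (fun x' _ => hsum x'), Finset.sum_sub_distrib,
      Finset.sum_ite_eq' Finset.univ x (fun _ => P x a x * ((⨆ b, Q x b) - Q x a))]
    simp
    ring
  have hQle : Q x a ≤ ⨆ b, Q x b :=
    le_ciSup (Set.Finite.bddAbove (Set.finite_range _)) a
  have hV : 0 ≤ (⨆ b, Q x b) - Q x a := by linarith
  have hPle1 : P x a x ≤ 1 := by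
    rw [← hP1 x a]
    exact Finset.single_le_sum (fun i _ => hP0 x a i) (Finset.mem_univ x)
  refine ⟨key, ?_, ?_⟩
  · rw [key]
    nlinarith [mul_nonneg (mul_nonneg hγ0 (hP0 x a x)) hV]
  · rw [key]
    nlinarith [mul_nonneg (mul_nonneg hγ0 (sub_nonneg.mpr hPle1)) hV]
end

section
/- (Uniform boundedness of iterates) Under the hypotheses of the previous lemma, the iterates satisfy |V_k(x)| ≤ (1/(1-γ))(2‖V_0‖∞ + ‖R‖∞) for all x ∈ X and all k ∈ ℕ. -/
/-- (Lemma 2) Under the hypotheses of Lemma 1, the value iterates satisfy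
`|V_k(x)| ≤ (1/(1-γ)) (2 ‖V₀‖∞ + ‖R‖∞)` for all `x` and `k`. -/
theorem sub_bellman_iterates_bounded
    {X A : Type*} [Fintype X] [Fintype A] [Nonempty X] [Nonempty A]
    (P : X → A → X → ℝ) (hP0 : ∀ x a x', 0 ≤ P x a x')
    (hP1 : ∀ x a, ∑ x', P x a x' = 1)
    (R : X → A → ℝ) (γ : ℝ) (hγ0 : 0 ≤ γ) (hγ1 : γ < 1)
    (T T' : (X → A → ℝ) → (X → A → ℝ))
    (hT : ∀ Q x a, T Q x a = R x a + γ * ∑ x', P x a x' * (⨆ b, Q x' b))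
    (h1 : ∀ Q x a, T' Q x a ≤ T Q x a)
    (h2 : ∀ (Q : X → A → ℝ) (x : X) (a : A), Q x a = (⨆ b, Q x b) → T' Q x a = T Q x a)
    (Q : ℕ → X → A → ℝ) (hQ : ∀ k, Q (k + 1) = T' (Q k)) :
    ∀ (x : X) (k : ℕ),
      |⨆ a, Q k x a| ≤
        (1 / (1 - γ)) *
          (2 * (⨆ x', |⨆ a, Q 0 x' a|) + ⨆ p : X × A, |R p.1 p.2|) := by
  have hbdd : ∀ (f : A → ℝ), BddAbove (Set.range f) := fun f =>
    (Set.finite_range f).bddAbove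
  have hbddX : ∀ (f : X → ℝ), BddAbove (Set.range f) := fun f =>
    (Set.finite_range f).bddAbove
  have hbddP : ∀ (f : X × A → ℝ), BddAbove (Set.range f) := fun f =>
    (Set.finite_range f).bddAbove
  set V : ℕ → X → ℝ := fun k x => ⨆ a, Q k x a with hV
  set N : ℕ → ℝ := fun k => ⨆ x, |V k x| with hN
  set Rb : ℝ := ⨆ p : X × A, |R p.1 p.2| with hRb
  have hRb0 : 0 ≤ Rb := by
    obtain ⟨x⟩ := ‹Nonempty X›; obtain ⟨a⟩ := ‹Nonempty A›
    exact le_trans (abs_nonneg (R x a)) (le_ciSup (f := fun p : X × A => |R p.1 p.2|) (hbddP _) (x, a))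
  have hRble : ∀ x a, |R x a| ≤ Rb := fun x a => le_ciSup (f := fun p : X × A => |R p.1 p.2|) (hbddP _) (x, a)
  have hVN : ∀ k x, |V k x| ≤ N k := fun k x => le_ciSup (f := fun x => |V k x|) (hbddX _) x
  have hN0 : ∀ k, 0 ≤ N k := fun k => by
    obtain ⟨x⟩ := ‹Nonempty X›; exact le_trans (abs_nonneg _) (hVN k x)
  -- key recurrence
  have key : ∀ k x, |V (k + 1) x| ≤ Rb + γ * N k := by
    intro k x
    have hsum : ∀ a, |∑ x', P x a x' * V k x'| ≤ N k := by
      intro a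
      calc |∑ x', P x a x' * V k x'| ≤ ∑ x', |P x a x' * V k x'| :=
            Finset.abs_sum_le_sum_abs _ _
        _ ≤ ∑ x', P x a x' * N k := by
            apply Finset.sum_le_sum
            intro i _
            rw [abs_mul, abs_of_nonneg (hP0 x a i)]
            exact mul_le_mul_of_nonneg_left (le_trans (hVN k i) le_rfl) (hP0 x a i)
        _ = N k := by rw [← Finset.sum_mul, hP1, one_mul]
    have hTbound : ∀ a, |T (Q k) x a| ≤ Rb + γ * N k := by
      intro a
      rw [hT]
      calc |R x a + γ * ∑ x', P x a x' * V k x'|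
          ≤ |R x a| + |γ * ∑ x', P x a x' * V k x'| := abs_add_le _ _
        _ ≤ Rb + γ * N k := by
            apply add_le_add (hRble x a)
            rw [abs_mul, abs_of_nonneg hγ0]
            exact mul_le_mul_of_nonneg_left (hsum a) hγ0
    rw [abs_le]
    constructor
    · -- lower bound via greedy action
      obtain ⟨a, ha⟩ := Finite.exists_max (Q k x)
      have hmax : Q k x a = V k x := by
        apply le_antisymm (le_ciSup (hbdd _) a)
        exact ciSup_le ha
      have : V (k + 1) x ≥ Q (k + 1) x a := le_ciSup (hbdd _) a
      have heq : Q (k + 1) x a = T (Q k) x a := by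
        rw [hQ k]; exact h2 (Q k) x a hmax
      have := (abs_le.mp (hTbound a)).1
      linarith [this, heq ▸ (le_ciSup (hbdd (Q (k+1) x)) a : Q (k+1) x a ≤ V (k+1) x)]
    · apply ciSup_le
      intro a
      have : Q (k + 1) x a ≤ T (Q k) x a := by rw [hQ k]; exact h1 (Q k) x a
      exact le_trans this (le_trans (le_abs_self _) (hTbound a))
  -- main bound
  intro x k
  set M : ℝ := (1 / (1 - γ)) * (2 * N 0 + Rb) with hM
  have h1γ : 0 < 1 - γ := by linarith
  have hMge : 2 * N 0 + Rb ≤ M := by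
    rw [hM]
    have : 1 ≤ 1 / (1 - γ) := by
      rw [le_div_iff₀ h1γ]; linarith
    nlinarith [hN0 0, hRb0]
  have hstep : Rb + γ * M ≤ M := by
    have hMval : (1 - γ) * M = 2 * N 0 + Rb := by
      rw [hM]; field_simp
    nlinarith [hN0 0]
  suffices h : ∀ k x, |V k x| ≤ M by exact h k x
  intro k
  induction k with
  | zero => intro x; exact le_trans (hVN 0 x) (by nlinarith [hN0 0, hRb0])
  | succ n ih =>
    intro x
    have hNn : N n ≤ M := ciSup_le ih
    calc |V (n + 1) x| ≤ Rb + γ * N n := key n x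
      _ ≤ Rb + γ * M := by nlinarith
      _ ≤ M := hstep
end

section
/- (Main theorem, optimality preservation) Let T' be an operator on Q-functions and α ∈ [0,1) such that for all Q, x, a: (1) T'Q(x,a) ≤ TQ(x,a), and (2) T'Q(x,a) ≥ TQ(x,a) - α[V_Q(x) - Q(x,a)] where V_Q(x) = max_b Q(x,b). Then for any bounded Q0, with Q_{k+1} = T'Q_k and V_k(x) = max_a Q_k(x,a), the sequence V_k(x) converges to V*(x) for every x. -/
/-!
`V_k` is squeezed between two one-sided contractions. From `T'Q ≤ TQ` we get
`V_k - V* ≤ γ^k ‖V_0 - V*‖`; from the lower bound, evaluated at a greedy action of `Q_{k+1}`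
(where the gap `V_Q - Q` vanishes), we get `V_k - V_{k+1} ≤ γ^k ‖V_0 - V_1‖`. Hence
`V_k - γ^k ‖V_0 - V_1‖ / (1 - γ)` is monotone and bounded, so `V_k` converges to some `V̂ ≤ V*`.
Along every fixed action `a`, the lower bound reads `Q_{k+1}(x,a) ≥ c_k + α Q_k(x,a)` with
`c_k → (T V̂)(x,a) - α V̂(x)` and `Q_k(x,a) ≤ V_k(x) → V̂(x)`; since `α < 1` this forces
`(T V̂)(x,a) ≤ V̂(x)`. A third one-sided contraction then gives `V* ≤ V̂`.
-/

open Filter Topology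

lemma le_norm_pi_apply {X : Type*} [Fintype X] (f : X → ℝ) (x : X) : f x ≤ ‖f‖ :=
  (Real.le_norm_self _).trans (norm_le_pi_norm f x)

lemma le_pow_mul_of_step {X : Type*} (u : ℕ → X → ℝ) (γ c : ℝ) (h0 : ∀ x, u 0 x ≤ c)
    (hstep : ∀ k b, (∀ x, u k x ≤ b) → ∀ x, u (k + 1) x ≤ γ * b) :
    ∀ k x, u k x ≤ γ ^ k * c := by
  intro k
  induction k with
  | zero => simpa using h0
  | succ k ih => simpa [pow_succ, mul_comm, mul_left_comm] using hstep k _ ih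

lemma nonpos_of_le_mul_bound {X : Type*} [Fintype X] {γ : ℝ} (hγ0 : 0 ≤ γ) (hγ1 : γ < 1)
    (e : X → ℝ) (hstep : ∀ b, (∀ x, e x ≤ b) → ∀ x, e x ≤ γ * b) (x : X) : e x ≤ 0 := by
  have hpow : ∀ k, e x ≤ γ ^ k * ‖e‖ :=
    fun k => le_pow_mul_of_step (fun _ => e) γ ‖e‖ (le_norm_pi_apply e)
      (fun _ => hstep) k x
  have hlim : Tendsto (fun k : ℕ => γ ^ k * ‖e‖) atTop (𝓝 0) := by
    simpa using (tendsto_pow_atTop_nhds_zero_of_lt_one hγ0 hγ1).mul_const ‖e‖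
  exact ge_of_tendsto' hlim hpow

lemma exists_tendsto_of_sub_succ_le_geometric {γ D M : ℝ} (hγ0 : 0 ≤ γ) (hγ1 : γ < 1)
    (hD : 0 ≤ D) (v : ℕ → ℝ) (hv : ∀ k, v k - v (k + 1) ≤ γ ^ k * D) (hM : ∀ k, v k ≤ M) :
    ∃ L, Tendsto v atTop (𝓝 L) := by
  set c := D / (1 - γ)
  have hc : 0 ≤ c := div_nonneg hD (by linarith)
  have hcD : ∀ k : ℕ, γ ^ k * c - γ ^ (k + 1) * c = γ ^ k * D := fun k => calc
    _ = γ ^ k * ((1 - γ) * c) := by ring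
    _ = γ ^ k * D := by rw [mul_div_cancel₀ D (by linarith : (1 : ℝ) - γ ≠ 0)]
  have hmono : Monotone fun k => v k - γ ^ k * c :=
    monotone_nat_of_le_succ fun k => by linarith [hv k, hcD k]
  have hbdd : BddAbove (Set.range fun k => v k - γ ^ k * c) := by
    refine ⟨M, ?_⟩
    rintro _ ⟨k, rfl⟩
    linarith [hM k, mul_nonneg (pow_nonneg hγ0 k) hc]
  have hpow : Tendsto (fun k : ℕ => γ ^ k * c) atTop (𝓝 0) := by
    simpa using (tendsto_pow_atTop_nhds_zero_of_lt_one hγ0 hγ1).mul_const c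
  exact ⟨_, by simpa using (tendsto_atTop_ciSup hmono hbdd).add hpow⟩

/-- Below the fixed point `lim c / (1 - α)` of `y ↦ lim c + α y`, the gap to `u` shrinks
geometrically; so `u`, and hence `v`, ends up almost above that fixed point. -/
lemma le_one_sub_mul_of_le_succ {α : ℝ} (hα0 : 0 ≤ α) (hα1 : α < 1) {u c v : ℕ → ℝ}
    {cLim L : ℝ} (hrec : ∀ k, c k + α * u k ≤ u (k + 1)) (hc : Tendsto c atTop (𝓝 cLim))
    (huv : ∀ k, u k ≤ v k) (hv : Tendsto v atTop (𝓝 L)) : cLim ≤ (1 - α) * L := by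
  have h1α : 0 < 1 - α := by linarith
  rw [← div_le_iff₀' h1α]
  refine le_of_forall_sub_le fun ε hε => ?_
  set t := cLim / (1 - α) - ε
  obtain ⟨K, hK⟩ := eventually_atTop.mp <|
    hc.eventually (eventually_ge_nhds (by nlinarith : cLim - (1 - α) * ε < cLim))
  have hfix : cLim - (1 - α) * ε + α * t = t := by
    simp only [t]; field_simp; ring
  have hgeom : ∀ n, α ^ n * (u K - t) ≤ u (n + K) - t := by
    intro n
    induction n with
    | zero => simp
    | succ n ih =>
      have := mul_le_mul_of_nonneg_left ih hα0
      rw [← mul_assoc, ← pow_succ', mul_sub α (u (n + K)) t] at this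
      rw [add_right_comm]
      linarith [hrec (n + K), hK (n + K) (Nat.le_add_left K n)]
  have hlow : Tendsto (fun n : ℕ => α ^ n * (u K - t)) atTop (𝓝 0) := by
    simpa using (tendsto_pow_atTop_nhds_zero_of_lt_one hα0 hα1).mul_const (u K - t)
  have hup : Tendsto (fun n => v (n + K) - t) atTop (𝓝 (L - t)) :=
    (hv.comp (tendsto_add_atTop_nat K)).sub_const t
  have := le_of_tendsto_of_tendsto' hlow hup fun n => (hgeom n).trans (by linarith [huv (n + K)])
  linarith

namespace MDP

variable {X A : Type*}

def IsStochastic [Fintype X] (P : X → A → X → ℝ) : Prop :=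
  (∀ x a x', 0 ≤ P x a x') ∧ ∀ x a, ∑ x', P x a x' = 1

noncomputable def value (Q : X → A → ℝ) (x : X) : ℝ :=
  ⨆ a, Q x a

lemma le_value [Finite A] (Q : X → A → ℝ) (x : X) (a : A) : Q x a ≤ value Q x :=
  le_ciSup (Set.finite_range _).bddAbove a

lemma exists_eq_value [Finite A] [Nonempty A] (Q : X → A → ℝ) (x : X) :
    ∃ a, Q x a = value Q x :=
  exists_eq_ciSup_of_finite

section Backup

variable [Fintype X] (R : X → A → ℝ) (γ : ℝ) (P : X → A → X → ℝ)

/-- The Bellman operator factors as `T Q = backup R γ P (value Q)`. -/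
def backup (f : X → ℝ) (x : X) (a : A) : ℝ :=
  R x a + γ * ∑ x', P x a x' * f x'

variable {R γ P}

lemma backup_sub_backup_le (hP : IsStochastic P) (hγ0 : 0 ≤ γ) {f g : X → ℝ} {b : ℝ}
    (hfg : ∀ x, f x - g x ≤ b) (x : X) (a : A) :
    backup R γ P f x a - backup R γ P g x a ≤ γ * b := by
  have hsum : ∑ x', P x a x' * f x' - ∑ x', P x a x' * g x' ≤ b := calc
    _ = ∑ x', P x a x' * (f x' - g x') := by simp only [mul_sub, Finset.sum_sub_distrib]
    _ ≤ ∑ x', P x a x' * b :=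
      Finset.sum_le_sum fun x' _ => mul_le_mul_of_nonneg_left (hfg x') (hP.1 x a x')
    _ = b := by rw [← Finset.sum_mul, hP.2, one_mul]
  simp only [backup]
  nlinarith

lemma sub_le_mul_of_backup_sandwich (hP : IsStochastic P) (hγ0 : 0 ≤ γ) {F G f g : X → ℝ}
    (hsandwich : ∀ x, ∃ a, F x ≤ backup R γ P f x a ∧ backup R γ P g x a ≤ G x)
    {b : ℝ} (hfg : ∀ x, f x - g x ≤ b) (x : X) : F x - G x ≤ γ * b := by
  obtain ⟨a, hF, hG⟩ := hsandwich x
  linarith [backup_sub_backup_le (R := R) hP hγ0 hfg x a]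

lemma tendsto_backup {ι : Type*} {l : Filter ι} {f : ι → X → ℝ} {g : X → ℝ}
    (hf : ∀ x, Tendsto (fun i => f i x) l (𝓝 (g x))) (x : X) (a : A) :
    Tendsto (fun i => backup R γ P (f i) x a) l (𝓝 (backup R γ P g x a)) :=
  tendsto_const_nhds.add
    ((tendsto_finsetSum _ fun x' _ => (hf x').const_mul (P x a x')).const_mul γ)

lemma backup_le_of_tendsto {α : ℝ} (hα0 : 0 ≤ α) (hα1 : α < 1) {Q : ℕ → X → A → ℝ}
    {V : ℕ → X → ℝ} {Vlim : X → ℝ} (hQV : ∀ k x a, Q k x a ≤ V k x)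
    (hlow : ∀ k x a, backup R γ P (V k) x a - α * (V k x - Q k x a) ≤ Q (k + 1) x a)
    (hV : ∀ x, Tendsto (fun k => V k x) atTop (𝓝 (Vlim x))) (x : X) (a : A) :
    backup R γ P Vlim x a ≤ Vlim x := by
  have := le_one_sub_mul_of_le_succ hα0 hα1 (u := fun k => Q k x a)
    (c := fun k => backup R γ P (V k) x a - α * V k x)
    (fun k => by linarith [hlow k x a]) ((tendsto_backup hV x a).sub ((hV x).const_mul α))
    (fun k => hQV k x a) (hV x)
  linarith

variable [Finite A] [Nonempty A] {Q : ℕ → X → A → ℝ} {Qstar : X → A → ℝ}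

lemma value_sub_value_fixedPoint_le (hP : IsStochastic P) (hγ0 : 0 ≤ γ)
    (hup : ∀ k x a, Q (k + 1) x a ≤ backup R γ P (value (Q k)) x a)
    (hQstar : ∀ x a, Qstar x a = backup R γ P (value Qstar) x a) (k : ℕ) (x : X) :
    value (Q k) x - value Qstar x ≤ γ ^ k * ‖value (Q 0) - value Qstar‖ := by
  refine le_pow_mul_of_step (fun k => value (Q k) - value Qstar) γ _ (le_norm_pi_apply _)
    (fun k b hb => sub_le_mul_of_backup_sandwich (R := R) hP hγ0 (fun x => ?_) hb) k x
  obtain ⟨a, ha⟩ := exists_eq_value (Q (k + 1)) x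
  exact ⟨a, ha ▸ hup k x a, (hQstar x a).symm.le.trans (le_value Qstar x a)⟩

lemma value_sub_value_succ_le (hP : IsStochastic P) (hγ0 : 0 ≤ γ) {α : ℝ}
    (hup : ∀ k x a, Q (k + 1) x a ≤ backup R γ P (value (Q k)) x a)
    (hlow : ∀ k x a, backup R γ P (value (Q k)) x a - α * (value (Q k) x - Q k x a) ≤
      Q (k + 1) x a) (k : ℕ) (x : X) :
    value (Q k) x - value (Q (k + 1)) x ≤ γ ^ k * ‖value (Q 0) - value (Q 1)‖ := by
  refine le_pow_mul_of_step (fun k => value (Q k) - value (Q (k + 1))) γ _ (le_norm_pi_apply _)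
    (fun k b hb => sub_le_mul_of_backup_sandwich (R := R) hP hγ0 (fun x => ?_) hb) k x
  -- at a greedy action of `Q (k + 1)` the lower bound loses nothing
  obtain ⟨a, ha⟩ := exists_eq_value (Q (k + 1)) x
  refine ⟨a, ha ▸ hup k x a, ?_⟩
  have := hlow (k + 1) x a
  rw [← ha, sub_self, mul_zero, sub_zero] at this
  exact this.trans (le_value _ x a)

lemma exists_tendsto_value_le (hP : IsStochastic P) (hγ0 : 0 ≤ γ) (hγ1 : γ < 1) {α : ℝ}
    (hup : ∀ k x a, Q (k + 1) x a ≤ backup R γ P (value (Q k)) x a)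
    (hlow : ∀ k x a, backup R γ P (value (Q k)) x a - α * (value (Q k) x - Q k x a) ≤
      Q (k + 1) x a)
    (hQstar : ∀ x a, Qstar x a = backup R γ P (value Qstar) x a) :
    ∃ Vlim : X → ℝ, (∀ x, Tendsto (fun k => value (Q k) x) atTop (𝓝 (Vlim x))) ∧
      ∀ x, Vlim x ≤ value Qstar x := by
  set p := ‖value (Q 0) - value Qstar‖
  have hupper : ∀ k x, value (Q k) x ≤ value Qstar x + γ ^ k * p :=
    fun k x => by linarith [value_sub_value_fixedPoint_le hP hγ0 hup hQstar k x]
  have hbdd : ∀ x k, value (Q k) x ≤ value Qstar x + p := fun x k =>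
    (hupper k x).trans <| add_le_add_right
      (mul_le_of_le_one_left (norm_nonneg _) (pow_le_one₀ hγ0 hγ1.le)) _
  choose Vlim hVlim using fun x => exists_tendsto_of_sub_succ_le_geometric hγ0 hγ1
    (norm_nonneg _) _ (fun k => value_sub_value_succ_le hP hγ0 hup hlow k x) (hbdd x)
  refine ⟨Vlim, hVlim, fun x => le_of_tendsto_of_tendsto' (hVlim x) ?_ (hupper · x)⟩
  simpa using ((tendsto_pow_atTop_nhds_zero_of_lt_one hγ0 hγ1).mul_const p).const_add
    (value Qstar x)

lemma value_fixedPoint_le_of_backup_le (hP : IsStochastic P) (hγ0 : 0 ≤ γ) (hγ1 : γ < 1)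
    (hQstar : ∀ x a, Qstar x a = backup R γ P (value Qstar) x a) {W : X → ℝ}
    (hW : ∀ x a, backup R γ P W x a ≤ W x) (x : X) : value Qstar x ≤ W x := by
  refine sub_nonpos.mp <| nonpos_of_le_mul_bound hγ0 hγ1 (value Qstar - W)
    (fun b hb => sub_le_mul_of_backup_sandwich (R := R) hP hγ0 (fun x => ?_) hb) x
  obtain ⟨a, ha⟩ := exists_eq_value Qstar x
  exact ⟨a, by rw [← ha, hQstar x a], hW x a⟩

end Backup

end MDP

open MDP

theorem optimality_preserving_main_general
    {X A : Type*} [Fintype X] [Fintype A] [Nonempty A]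
    (P : X → A → X → ℝ) (hP0 : ∀ x a x', 0 ≤ P x a x')
    (hP1 : ∀ x a, ∑ x', P x a x' = 1)
    (R : X → A → ℝ) (γ : ℝ) (hγ0 : 0 ≤ γ) (hγ1 : γ < 1)
    (T T' : (X → A → ℝ) → (X → A → ℝ))
    (hT : ∀ Q x a, T Q x a = R x a + γ * ∑ x', P x a x' * (⨆ b, Q x' b))
    (α : ℝ) (hα0 : 0 ≤ α) (hα1 : α < 1)
    (h1 : ∀ Q x a, T' Q x a ≤ T Q x a)
    (h2 : ∀ (Q : X → A → ℝ) (x : X) (a : A),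
      T' Q x a ≥ T Q x a - α * ((⨆ b, Q x b) - Q x a))
    (Qstar : X → A → ℝ)
    (hQstar : ∀ x a, Qstar x a = R x a + γ * ∑ x', P x a x' * (⨆ b, Qstar x' b))
    (Vstar : X → ℝ) (hVstar : ∀ x, Vstar x = ⨆ a, Qstar x a)
    (Q : ℕ → X → A → ℝ) (hQ : ∀ k, Q (k + 1) = T' (Q k)) :
    ∀ x, Tendsto (fun k => ⨆ a, Q k x a) atTop (nhds (Vstar x)) := by
  have hP : IsStochastic P := ⟨hP0, hP1⟩
  have hup : ∀ k x a, Q (k + 1) x a ≤ backup R γ P (value (Q k)) x a := fun k x a => by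
    simpa [hQ, hT, backup, value] using h1 (Q k) x a
  have hlow : ∀ k x a, backup R γ P (value (Q k)) x a - α * (value (Q k) x - Q k x a) ≤
      Q (k + 1) x a := fun k x a => by
    simpa [hQ, hT, backup, value] using h2 (Q k) x a
  have hQstar' : ∀ x a, Qstar x a = backup R γ P (value Qstar) x a := by
    simpa [backup, value] using hQstar
  obtain ⟨Vlim, hVlim, hle⟩ := exists_tendsto_value_le hP hγ0 hγ1 hup hlow hQstar'
  have hge : ∀ x, value Qstar x ≤ Vlim x := value_fixedPoint_le_of_backup_le hP hγ0 hγ1 hQstar'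
    (backup_le_of_tendsto hα0 hα1 (fun k => le_value (Q k)) hlow hVlim)
  intro x
  have := hVlim x
  rw [le_antisymm (hle x) (hge x)] at this
  rwa [hVstar x]

/-- (Main theorem, optimality preservation) If `T'Q ≤ TQ` and
`T'Q(x,a) ≥ TQ(x,a) - α [V_Q(x) - Q(x,a)]` pointwise for some `α ∈ [0,1)`,
then the value functions of the iterates `Q_{k+1} = T'Q_k` converge to `V*`. -/
theorem optimality_preserving_main
    {X A : Type*} [Fintype X] [Fintype A] [Nonempty X] [Nonempty A]
    (P : X → A → X → ℝ) (hP0 : ∀ x a x', 0 ≤ P x a x')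
    (hP1 : ∀ x a, ∑ x', P x a x' = 1)
    (R : X → A → ℝ) (γ : ℝ) (hγ0 : 0 ≤ γ) (hγ1 : γ < 1)
    (T T' : (X → A → ℝ) → (X → A → ℝ))
    (hT : ∀ Q x a, T Q x a = R x a + γ * ∑ x', P x a x' * (⨆ b, Q x' b))
    (α : ℝ) (hα0 : 0 ≤ α) (hα1 : α < 1)
    (h1 : ∀ Q x a, T' Q x a ≤ T Q x a)
    (h2 : ∀ (Q : X → A → ℝ) (x : X) (a : A),
      T' Q x a ≥ T Q x a - α * ((⨆ b, Q x b) - Q x a))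
    (Qstar : X → A → ℝ)
    (hQstar : ∀ x a, Qstar x a = R x a + γ * ∑ x', P x a x' * (⨆ b, Qstar x' b))
    (Vstar : X → ℝ) (hVstar : ∀ x, Vstar x = ⨆ a, Qstar x a)
    (Q : ℕ → X → A → ℝ) (hQ : ∀ k, Q (k + 1) = T' (Q k)) :
    ∀ x, Tendsto (fun k => ⨆ a, Q k x a) atTop (nhds (Vstar x)) :=
  optimality_preserving_main_general P hP0 hP1 R γ hγ0 hγ1 T T' hT α hα0 hα1 h1 h2 Qstar hQstar
    Vstar hVstar Q hQ
end

section
/- (Main theorem, suboptimal actions stay suboptimal) Under the hypotheses of the main theorem, for any state x and action a with Q*(x,a) < V*(x), we have limsup_{k→∞} Q_k(x,a) ≤ Q*(x,a) < V*(x). -/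
open Filter Topology

/-- (Main theorem, suboptimal actions stay suboptimal) Under the hypotheses
of the main theorem, if `Q*(x,a) < V*(x)` then
`limsup_k Q_k(x,a) ≤ Q*(x,a) < V*(x)`. -/
theorem suboptimal_stay_suboptimal
    {X A : Type*} [Fintype X] [Fintype A] [Nonempty X] [Nonempty A]
    (P : X → A → X → ℝ) (hP0 : ∀ x a x', 0 ≤ P x a x')
    (hP1 : ∀ x a, ∑ x', P x a x' = 1)
    (R : X → A → ℝ) (γ : ℝ) (hγ0 : 0 ≤ γ) (hγ1 : γ < 1)
    (T T' : (X → A → ℝ) → (X → A → ℝ))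
    (hT : ∀ Q x a, T Q x a = R x a + γ * ∑ x', P x a x' * (⨆ b, Q x' b))
    (α : ℝ) (hα0 : 0 ≤ α) (hα1 : α < 1)
    (h1 : ∀ Q x a, T' Q x a ≤ T Q x a)
    (h2 : ∀ (Q : X → A → ℝ) (x : X) (a : A),
      T' Q x a ≥ T Q x a - α * ((⨆ b, Q x b) - Q x a))
    (Qstar : X → A → ℝ)
    (hQstar : ∀ x a, Qstar x a = R x a + γ * ∑ x', P x a x' * (⨆ b, Qstar x' b))
    (Vstar : X → ℝ) (hVstar : ∀ x, Vstar x = ⨆ a, Qstar x a)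
    (Q : ℕ → X → A → ℝ) (hQ : ∀ k, Q (k + 1) = T' (Q k))
    (hconv : ∀ x, Tendsto (fun k => ⨆ a, Q k x a) atTop (nhds (Vstar x)))
    (x : X) (a : A) (hsub : Qstar x a < Vstar x) :
    limsup (fun k => Q k x a) atTop ≤ Qstar x a ∧ Qstar x a < Vstar x := by

  refine ⟨?_, hsub⟩
  -- lower bounds on the value sequences
  have hLB : ∀ x' : X, ∃ L, ∀ k, L ≤ ⨆ b, Q k x' b := by
    intro x'
    obtain ⟨L, hL⟩ := (hconv x').bddBelow_range
    exact ⟨L, fun k => hL ⟨k, rfl⟩⟩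
  choose L hL using hLB
  obtain ⟨U, hU⟩ : ∃ U, ∀ k, (⨆ b, Q k x b) ≤ U := by
    obtain ⟨U, hU⟩ := (hconv x).bddAbove_range
    exact ⟨U, fun k => hU ⟨k, rfl⟩⟩
  set C := R x a + γ * ∑ x', P x a x' * L x' with hC
  have hTlb : ∀ k, C ≤ T (Q k) x a := by
    intro k
    rw [hT]
    have hs : ∑ x', P x a x' * L x' ≤ ∑ x', P x a x' * (⨆ b, Q k x' b) :=
      Finset.sum_le_sum fun x' _ => mul_le_mul_of_nonneg_left (hL x' k) (hP0 x a x')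
    have := mul_le_mul_of_nonneg_left hs hγ0
    simp only [hC]
    linarith
  set D := C - α * U with hD
  have h1α : (0:ℝ) < 1 - α := by linarith
  set m := min (Q 0 x a) (D / (1 - α)) with hm
  have hlb : ∀ k, m ≤ Q k x a := by
    intro k
    induction k with
    | zero => exact min_le_left _ _
    | succ k ih =>
      have h2' := h2 (Q k) x a
      rw [← hQ k] at h2'
      have hαV : α * (⨆ b, Q k x b) ≤ α * U := mul_le_mul_of_nonneg_left (hU k) hα0
      have hstep : D + α * Q k x a ≤ Q (k+1) x a := by
        have := hTlb k
        simp only [ge_iff_le] at h2'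
        have hexp : T (Q k) x a - α * ((⨆ b, Q k x b) - Q k x a)
            = T (Q k) x a - α * (⨆ b, Q k x b) + α * Q k x a := by ring
        rw [hexp] at h2'
        linarith
      have hmD : (1 - α) * m ≤ D := by
        have h' : m ≤ D / (1 - α) := min_le_right _ _
        calc (1-α)*m ≤ (1-α)*(D/(1-α)) := mul_le_mul_of_nonneg_left h' (le_of_lt h1α)
          _ = D := by field_simp
      have hαm : α * m ≤ α * Q k x a := mul_le_mul_of_nonneg_left ih hα0
      nlinarith
  -- T (Q k) x a converges to Qstar x a
  have hQeq : Qstar x a = R x a + γ * ∑ x', P x a x' * Vstar x' := by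
    rw [hQstar]
    congr 2
    exact Finset.sum_congr rfl fun x' _ => by rw [hVstar]
  have htend : Tendsto (fun k => T (Q k) x a) atTop (nhds (Qstar x a)) := by
    have hsum : Tendsto (fun k => ∑ x', P x a x' * (⨆ b, Q k x' b)) atTop
        (nhds (∑ x', P x a x' * Vstar x')) :=
      tendsto_finset_sum _ fun x' _ => (hconv x').const_mul _
    have h' := (hsum.const_mul γ).const_add (R x a)
    rw [hQeq]
    simpa only [hT] using h'
  have hle : ∀ k, Q (k+1) x a ≤ T (Q k) x a := fun k => by rw [hQ]; exact h1 _ x a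
  have key : limsup (fun k => Q (k+1) x a) atTop ≤ Qstar x a := by
    calc limsup (fun k => Q (k+1) x a) atTop ≤ limsup (fun k => T (Q k) x a) atTop :=
          limsup_le_limsup (Eventually.of_forall hle)
            (isCoboundedUnder_le_of_le atTop (fun k => hlb (k+1)))
            htend.isBoundedUnder_le
      _ = Qstar x a := htend.limsup_eq
  calc limsup (fun k => Q k x a) atTop
      = limsup (fun k => Q (k+1) x a) atTop := (limsup_nat_add (fun k => Q k x a) 1).symm
    _ ≤ Qstar x a := key
end

section
/- (Gap-increasing property) Under the hypotheses of the main theorem, for all x and a: liminf_{k→∞}[V_k(x) - Q_k(x,a)] ≥ V*(x) - Q*(x,a), i.e., asymptotic action gaps under T' are at least the optimal action gaps. -/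
open Filter Topology

set_option maxHeartbeats 2000000

/-- (Gap-increasing property) Under the hypotheses of the main theorem,
`liminf_k [V_k(x) - Q_k(x,a)] ≥ V*(x) - Q*(x,a)` for all `x, a`. -/
theorem gap_increasing
    {X A : Type*} [Fintype X] [Fintype A] [Nonempty X] [Nonempty A]
    (P : X → A → X → ℝ) (hP0 : ∀ x a x', 0 ≤ P x a x')
    (hP1 : ∀ x a, ∑ x', P x a x' = 1)
    (R : X → A → ℝ) (γ : ℝ) (hγ0 : 0 ≤ γ) (hγ1 : γ < 1)
    (T T' : (X → A → ℝ) → (X → A → ℝ))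
    (hT : ∀ Q x a, T Q x a = R x a + γ * ∑ x', P x a x' * (⨆ b, Q x' b))
    (α : ℝ) (hα0 : 0 ≤ α) (hα1 : α < 1)
    (h1 : ∀ Q x a, T' Q x a ≤ T Q x a)
    (h2 : ∀ (Q : X → A → ℝ) (x : X) (a : A),
      T' Q x a ≥ T Q x a - α * ((⨆ b, Q x b) - Q x a))
    (Qstar : X → A → ℝ)
    (hQstar : ∀ x a, Qstar x a = R x a + γ * ∑ x', P x a x' * (⨆ b, Qstar x' b))
    (Vstar : X → ℝ) (hVstar : ∀ x, Vstar x = ⨆ a, Qstar x a)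
    (Q : ℕ → X → A → ℝ) (hQ : ∀ k, Q (k + 1) = T' (Q k)) :
    ∀ (x : X) (a : A),
      Vstar x - Qstar x a ≤
        liminf (fun k => (⨆ b, Q k x b) - Q k x a) atTop := by
  -- notation
  set Vk : ℕ → X → ℝ := fun k x => ⨆ b, Q k x b with hVk
  -- basic sup facts
  have hbdd : ∀ (f : A → ℝ), BddAbove (Set.range f) := fun f => (Set.finite_range f).bddAbove
  have hleV : ∀ k x a, Q k x a ≤ Vk k x := fun k x a => le_ciSup (hbdd _) a
  have hVle : ∀ k x (c : ℝ), (∀ b, Q k x b ≤ c) → Vk k x ≤ c := fun k x c h => ciSup_le h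
  have hQsleV : ∀ x a, Qstar x a ≤ Vstar x := fun x a => (hVstar x) ▸ le_ciSup (hbdd _) a
  -- sum facts
  have hsum_const : ∀ x a (c : ℝ), ∑ x', P x a x' * c = c := by
    intro x a c
    rw [← Finset.sum_mul, hP1, one_mul]
  have hsum_mono : ∀ x a (f g : X → ℝ), (∀ x', f x' ≤ g x') →
      ∑ x', P x a x' * f x' ≤ ∑ x', P x a x' * g x' := by
    intro x a f g h
    exact Finset.sum_le_sum fun i _ => mul_le_mul_of_nonneg_left (h i) (hP0 x a i)
  have hsum_le_add_const : ∀ x a (f g : X → ℝ) (c : ℝ), (∀ x', f x' ≤ g x' + c) →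
      ∑ x', P x a x' * f x' ≤ (∑ x', P x a x' * g x') + c := by
    intro x a f g c h
    calc ∑ x', P x a x' * f x' ≤ ∑ x', P x a x' * (g x' + c) := hsum_mono x a _ _ h
      _ = (∑ x', P x a x' * g x') + ∑ x', P x a x' * c := by
          rw [← Finset.sum_add_distrib]
          exact Finset.sum_congr rfl fun i _ => by ring
      _ = (∑ x', P x a x' * g x') + c := by rw [hsum_const]
  have hsum_ge_sub_const : ∀ x a (f g : X → ℝ) (c : ℝ), (∀ x', g x' - c ≤ f x') →
      (∑ x', P x a x' * g x') - c ≤ ∑ x', P x a x' * f x' := by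
    intro x a f g c h
    have : ∑ x', P x a x' * (g x' - c) ≤ ∑ x', P x a x' * f x' := hsum_mono x a _ _ h
    have e : ∑ x', P x a x' * (g x' - c)
        = (∑ x', P x a x' * g x') - ∑ x', P x a x' * c := by
      rw [← Finset.sum_sub_distrib]
      exact Finset.sum_congr rfl fun i _ => by ring
    rw [hsum_const x a c] at e
    linarith [this, e.ge, e.le]
  -- Bellman equation for Qstar in terms of Vstar
  have hQs' : ∀ x a, Qstar x a = R x a + γ * ∑ x', P x a x' * Vstar x' := by
    intro x a
    rw [hQstar]
    congr 1
    congr 1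
    exact Finset.sum_congr rfl fun i _ => by rw [hVstar]
  -- upper bound constant
  obtain ⟨w0', hw0'⟩ := Finite.exists_le (fun p : X × A => Q 0 p.1 p.2 - Qstar p.1 p.2)
  set w0 : ℝ := max w0' 0 with hw0def
  have hw00 : 0 ≤ w0 := le_max_right _ _
  have hw0 : ∀ x a, Q 0 x a - Qstar x a ≤ w0 := fun x a =>
    le_trans (hw0' (x, a)) (le_max_left _ _)
  -- (1) upper bound on Q k
  have hQup : ∀ k x a, Q k x a ≤ Qstar x a + γ ^ k * w0 := by
    intro k
    induction k with
    | zero => intro x a; have := hw0 x a; simp only [pow_zero, one_mul]; linarith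
    | succ k ih =>
      intro x a
      have hVkup : ∀ x', Vk k x' ≤ Vstar x' + γ ^ k * w0 := by
        intro x'
        exact hVle k x' _ fun b => le_trans (ih x' b) (by linarith [hQsleV x' b])
      have hsum : ∑ x', P x a x' * Vk k x' ≤ (∑ x', P x a x' * Vstar x') + γ ^ k * w0 :=
        hsum_le_add_const x a _ _ _ hVkup
      have hTle : Q (k+1) x a ≤ R x a + γ * ∑ x', P x a x' * Vk k x' := by
        rw [hQ k]
        exact le_of_le_of_eq (h1 (Q k) x a) (hT (Q k) x a)
      have : Q (k+1) x a ≤ R x a + γ * ((∑ x', P x a x' * Vstar x') + γ ^ k * w0) :=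
        le_trans hTle (by nlinarith [mul_le_mul_of_nonneg_left hsum hγ0])
      have hpow : γ ^ (k+1) = γ * γ ^ k := by ring
      rw [hQs' x a]
      nlinarith [this]
  have hVkup' : ∀ k x, Vk k x ≤ Vstar x + γ ^ k * w0 := by
    intro k x
    exact hVle k x _ fun b => le_trans (hQup k x b) (by linarith [hQsleV x b])
  -- the EMA sequence
  let Vt : ℕ → X → ℝ := fun n =>
    Nat.rec (motive := fun _ => X → ℝ) (Vk 0)
      (fun k W => fun x => (1 - α) * Vk k x + α * W x) n
  have hVt0 : ∀ x, Vt 0 x = Vk 0 x := fun _ => rfl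
  have hVtS : ∀ k x, Vt (k+1) x = (1 - α) * Vk k x + α * Vt k x := fun _ _ => rfl
  -- constant C for the approximate Bellman inequality
  obtain ⟨C', hC'⟩ := Finite.exists_le (fun p : X × A =>
    R p.1 p.2 + γ * (∑ x', P p.1 p.2 x' * Vk 0 x') - (1 - α) * Q 0 p.1 p.2 - α * Vk 0 p.1)
  set C : ℝ := max C' 0 with hCdef
  have hC0 : 0 ≤ C := le_max_right _ _
  have hC : ∀ x a,
      R x a + γ * (∑ x', P x a x' * Vk 0 x') - (1 - α) * Q 0 x a - α * Vk 0 x ≤ C :=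
    fun x a => le_trans (hC' (x, a)) (le_max_left _ _)
  -- (3) key inductive inequality
  have hH : ∀ k x a,
      R x a + γ * (∑ x', P x a x' * Vt k x') - C * α ^ k ≤ (1 - α) * Q k x a + α * Vt k x := by
    intro k
    induction k with
    | zero =>
      intro x a
      have := hC x a
      simp only [pow_zero, mul_one]
      have e : ∀ x', Vt 0 x' = Vk 0 x' := hVt0
      rw [show (∑ x', P x a x' * Vt 0 x') = ∑ x', P x a x' * Vk 0 x' from
        Finset.sum_congr rfl fun i _ => by rw [e i]]
      rw [hVt0 x]
      linarith
    | succ k ih =>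
      intro x a
      have hlow : R x a + γ * (∑ x', P x a x' * Vk k x') - α * (Vk k x - Q k x a)
          ≤ Q (k+1) x a := by
        rw [hQ k]
        have := h2 (Q k) x a
        rw [hT (Q k) x a] at this
        exact this
      have hlin : (∑ x', P x a x' * Vt (k+1) x')
          = (1 - α) * (∑ x', P x a x' * Vk k x') + α * (∑ x', P x a x' * Vt k x') := by
        rw [show (∑ x', P x a x' * Vt (k+1) x')
            = ∑ x', ((1-α) * (P x a x' * Vk k x') + α * (P x a x' * Vt k x')) from
          Finset.sum_congr rfl fun i _ => by rw [hVtS k i]; ring]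
        rw [Finset.sum_add_distrib, ← Finset.mul_sum, ← Finset.mul_sum]
      have hA : (1 - α) * (R x a + γ * (∑ x', P x a x' * Vk k x') - α * (Vk k x - Q k x a))
          ≤ (1 - α) * Q (k+1) x a :=
        mul_le_mul_of_nonneg_left hlow (by linarith)
      have hB : α * (R x a + γ * (∑ x', P x a x' * Vt k x') - C * α ^ k)
          ≤ α * ((1 - α) * Q k x a + α * Vt k x) :=
        mul_le_mul_of_nonneg_left (ih x a) hα0
      rw [hlin, hVtS k x]
      have hpow : α ^ (k+1) = α * α ^ k := by ring
      nlinarith [hA, hB]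
  -- choose σ
  set ρ : ℝ := max α γ with hρdef
  set σ : ℝ := (ρ + 1) / 2 with hσdef
  have hρ0 : 0 ≤ ρ := le_trans hα0 (le_max_left _ _)
  have hρ1 : ρ < 1 := max_lt hα1 hγ1
  have hσ0 : 0 < σ := by simp only [hσdef]; linarith
  have hσ1 : σ < 1 := by simp only [hσdef]; linarith
  have hασ : α < σ := lt_of_le_of_lt (le_max_left _ _) (by simp only [hσdef]; linarith)
  have hγσ : γ < σ := lt_of_le_of_lt (le_max_right _ _) (by simp only [hσdef]; linarith)
  have hασk : ∀ k : ℕ, α ^ k ≤ σ ^ k := fun k => pow_le_pow_left₀ hα0 (le_of_lt hασ) k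
  have hγσk : ∀ k : ℕ, γ ^ k ≤ σ ^ k := fun k => pow_le_pow_left₀ hγ0 (le_of_lt hγσ) k
  have hσk0 : ∀ k : ℕ, 0 < σ ^ k := fun k => pow_pos hσ0 k
  have hσk1 : ∀ k : ℕ, σ ^ k ≤ 1 := fun k => pow_le_one₀ (le_of_lt hσ0) (le_of_lt hσ1)
  -- base bound for Vstar - Vt 0
  obtain ⟨D0', hD0'⟩ := Finite.exists_le (fun x : X => Vstar x - Vk 0 x)
  set D : ℝ := max (max D0' 0) (C / (σ - γ)) with hDdef
  have hD0 : 0 ≤ D := le_trans (le_max_right _ _) (le_max_left _ _)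
  have hDC : γ * D + C ≤ σ * D := by
    have h1' : C / (σ - γ) ≤ D := le_max_right _ _
    have h2' : 0 < σ - γ := by linarith
    have := (div_le_iff₀ h2').mp h1'
    nlinarith
  -- (4) lower bound on Vt
  have hVtlow : ∀ k x, Vstar x - Vt k x ≤ D * σ ^ k := by
    intro k
    induction k with
    | zero =>
      intro x
      rw [hVt0 x]
      simp only [pow_zero, mul_one]
      exact le_trans (le_trans (hD0' x) (le_max_left _ _)) (le_max_left _ _)
    | succ k ih =>
      intro x
      obtain ⟨a0, ha0⟩ := Finite.exists_max (Qstar x)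
      have hVQ : Vstar x = Qstar x a0 := by
        rw [hVstar]
        exact le_antisymm (ciSup_le ha0) (le_ciSup (hbdd _) a0)
      have hkey := hH k x a0
      have hVt1 : (1 - α) * Q k x a0 + α * Vt k x ≤ Vt (k+1) x := by
        rw [hVtS k x]
        have := hleV k x a0
        nlinarith
      have hsum : (∑ x', P x a0 x' * Vstar x') - D * σ ^ k ≤ ∑ x', P x a0 x' * Vt k x' :=
        hsum_ge_sub_const x a0 _ _ _ fun x' => by linarith [ih x']
      have : R x a0 + γ * ((∑ x', P x a0 x' * Vstar x') - D * σ ^ k) - C * α ^ k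
          ≤ Vt (k+1) x := by
        refine le_trans ?_ (le_trans hkey hVt1)
        have := mul_le_mul_of_nonneg_left hsum hγ0
        linarith
      rw [hQs' x a0] at hVQ
      have hpow : σ ^ (k+1) = σ * σ ^ k := by ring
      have hαk := hασk k
      have hσkpos := hσk0 k
      nlinarith [this, mul_le_mul_of_nonneg_left (hαk) hC0,
        mul_le_mul_of_nonneg_right hDC (le_of_lt hσkpos)]
  -- (5) upper bound on Vt
  set E : ℝ := max w0 ((1 - α) * w0 / (σ - α)) with hEdef
  have hE0 : 0 ≤ E := le_trans hw00 (le_max_left _ _)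
  have hEC : (1 - α) * w0 + α * E ≤ σ * E := by
    have h1' : (1 - α) * w0 / (σ - α) ≤ E := le_max_right _ _
    have h2' : 0 < σ - α := by linarith
    have := (div_le_iff₀ h2').mp h1'
    nlinarith
  have hVtup : ∀ k x, Vt k x ≤ Vstar x + E * σ ^ k := by
    intro k
    induction k with
    | zero =>
      intro x
      rw [hVt0 x]
      simp only [pow_zero, mul_one]
      have := hVkup' 0 x
      simp only [pow_zero, one_mul] at this
      have : Vk 0 x ≤ Vstar x + w0 := this
      have hEw : w0 ≤ E := le_max_left _ _
      linarith
    | succ k ih =>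
      intro x
      rw [hVtS k x]
      have h1' := hVkup' k x
      have h2' := ih x
      have hγk := hγσk k
      have hσkpos := hσk0 k
      have hpow : σ ^ (k+1) = σ * σ ^ k := by ring
      nlinarith [mul_le_mul_of_nonneg_right hEC (le_of_lt hσkpos),
        mul_le_mul_of_nonneg_left h1' (by linarith : (0:ℝ) ≤ 1 - α),
        mul_le_mul_of_nonneg_left h2' hα0,
        mul_le_mul_of_nonneg_left hγk (mul_nonneg (by linarith : (0:ℝ) ≤ 1 - α) hw00)]
  -- (6) lower bound on Vk
  set F : ℝ := (D * σ + α * E) / (1 - α) with hFdef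
  have hF0 : 0 ≤ F := div_nonneg (by nlinarith) (by linarith)
  have hVklow : ∀ k x, Vstar x - F * σ ^ k ≤ Vk k x := by
    intro k x
    have h4 := hVtlow (k+1) x
    have h5 := hVtup k x
    have hVteq : (1 - α) * Vk k x = Vt (k+1) x - α * Vt k x := by rw [hVtS k x]; ring
    have hne : (1:ℝ) - α ≠ 0 := by linarith
    have hFe : (1 - α) * F = D * σ + α * E := by
      rw [hFdef]
      field_simp
    have hpow : σ ^ (k+1) = σ * σ ^ k := by ring
    have h4' : Vstar x - Vt (k+1) x ≤ D * (σ * σ ^ k) := by rw [← hpow]; exact h4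
    have hσkpos := le_of_lt (hσk0 k)
    have e1 : (1 - α) * F * σ ^ k ≤ (D * σ + α * E) * σ ^ k :=
      mul_le_mul_of_nonneg_right hFe.le hσkpos
    have e2 : (D * σ + α * E) * σ ^ k ≤ (1 - α) * F * σ ^ k :=
      mul_le_mul_of_nonneg_right hFe.ge hσkpos
    have key : (1 - α) * (Vstar x - F * σ ^ k) ≤ (1 - α) * Vk k x := by
      rw [hVteq]
      nlinarith [h4', e1, e2, mul_le_mul_of_nonneg_left h5 hα0]
    exact le_of_mul_le_mul_left key (by linarith)
  -- (7) pointwise bound for the gap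
  intro x a
  set c : ℝ := Vstar x - Qstar x a with hc
  set M : ℝ := F + w0 with hM
  have hM0 : 0 ≤ M := by rw [hM]; linarith
  have hgap : ∀ k, c - M * σ ^ k ≤ Vk k x - Q k x a := by
    intro k
    have h1' := hVklow k x
    have h2' := hQup k x a
    have h3' := hγσk k
    have hσkpos := le_of_lt (hσk0 k)
    nlinarith [mul_le_mul_of_nonneg_left h3' hw00]
  -- (8) liminf
  have htend : Tendsto (fun k : ℕ => c - M * σ ^ k) atTop (𝓝 c) := by
    have hp : Tendsto (fun k : ℕ => σ ^ k) atTop (𝓝 0) :=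
      tendsto_pow_atTop_nhds_zero_of_lt_one (le_of_lt hσ0) hσ1
    have := (hp.const_mul M)
    have h' : Tendsto (fun k : ℕ => c - M * σ ^ k) atTop (𝓝 (c - M * 0)) :=
      tendsto_const_nhds.sub this
    simpa using h'
  -- the gap sequence is bounded above: Q is bounded below
  -- lower bound on V
  have hVbdd : ∀ k x', Vstar x' - F ≤ Vk k x' := by
    intro k x'
    have := hVklow k x'
    nlinarith [hσk1 k, hσk0 k]
  obtain ⟨mR', hmR'⟩ := Finite.exists_le (fun p : X × A =>
    -(R p.1 p.2))
  obtain ⟨mV', hmV'⟩ := Finite.exists_le (fun x' : X => -(Vstar x' - F))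
  obtain ⟨MV', hMV'⟩ := Finite.exists_le (fun x' : X => Vstar x' + w0)
  obtain ⟨mQ0', hmQ0'⟩ := Finite.exists_le (fun p : X × A => -(Q 0 p.1 p.2))
  -- c0: uniform lower bound for R x a + γ * sum P Vk - α * Vk x over all k
  set c0 : ℝ := -mR' - γ * mV' - α * MV' with hc0
  have hc0le : ∀ k x' a', c0 ≤ R x' a' + γ * (∑ y, P x' a' y * Vk k y) - α * Vk k x' := by
    intro k x' a'
    have hR : -mR' ≤ R x' a' := by have := hmR' (x', a'); linarith
    have hsuml : ∑ y, P x' a' y * (-mV') ≤ ∑ y, P x' a' y * Vk k y := by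
      apply hsum_mono
      intro y
      have := hmV' y
      have := hVbdd k y
      linarith
    rw [hsum_const x' a' (-mV')] at hsuml
    have hVup : Vk k x' ≤ MV' := by
      have := hVkup' k x'
      have hγ1k : γ ^ k ≤ 1 := pow_le_one₀ hγ0 (le_of_lt hγ1)
      have := hMV' x'
      nlinarith
    have t1 : γ * (-mV') ≤ γ * (∑ y, P x' a' y * Vk k y) :=
      mul_le_mul_of_nonneg_left hsuml hγ0
    have t2 : α * Vk k x' ≤ α * MV' := mul_le_mul_of_nonneg_left hVup hα0
    rw [hc0]
    linarith
  set mQ : ℝ := min (-mQ0') (c0 / (1 - α)) with hmQ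
  have hQlow : ∀ k x' a', mQ ≤ Q k x' a' := by
    intro k
    induction k with
    | zero =>
      intro x' a'
      have := hmQ0' (x', a')
      have : -mQ0' ≤ Q 0 x' a' := by linarith
      exact le_trans (min_le_left _ _) this
    | succ k ih =>
      intro x' a'
      have hlow : R x' a' + γ * (∑ y, P x' a' y * Vk k y) - α * (Vk k x' - Q k x' a')
          ≤ Q (k+1) x' a' := by
        rw [hQ k]
        have := h2 (Q k) x' a'
        rw [hT (Q k) x' a'] at this
        exact this
      have h3' := hc0le k x' a'
      have h4' := ih x' a'
      have h5' : mQ * (1 - α) ≤ c0 := by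
        have := min_le_right (-mQ0') (c0 / (1 - α))
        have hpos : 0 < 1 - α := by linarith
        rw [hmQ]
        calc min (-mQ0') (c0 / (1 - α)) * (1 - α) ≤ (c0 / (1 - α)) * (1 - α) :=
          mul_le_mul_of_nonneg_right (min_le_right _ _) (le_of_lt hpos)
        _ = c0 := by field_simp
      nlinarith [mul_le_mul_of_nonneg_left h4' hα0]
  -- gap bounded above
  have hgapub : ∀ k, Vk k x - Q k x a ≤ MV' - mQ := by
    intro k
    have hVup : Vk k x ≤ MV' := by
      have := hVkup' k x
      have hγ1k : γ ^ k ≤ 1 := pow_le_one₀ hγ0 (le_of_lt hγ1)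
      have := hMV' x
      nlinarith
    have := hQlow k x a
    linarith
  have hcob : IsCoboundedUnder (· ≥ ·) atTop (fun k => Vk k x - Q k x a) :=
    isCoboundedUnder_ge_of_le atTop (x := MV' - mQ) hgapub
  have hbddu : IsBoundedUnder (· ≥ ·) atTop (fun k : ℕ => c - M * σ ^ k) := by
    apply isBoundedUnder_of
    refine ⟨c - M, fun k => ?_⟩
    simp only [ge_iff_le]
    nlinarith [hσk1 k, hσk0 k]
  calc c = liminf (fun k : ℕ => c - M * σ ^ k) atTop := (htend.liminf_eq).symm
    _ ≤ liminf (fun k => Vk k x - Q k x a) atTop :=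
        liminf_le_liminf (Eventually.of_forall hgap) hbddu hcob
end

section
/- (Persistent advantage learning satisfies the conditions) For α ∈ [0,1), the operator T_PAL Q(x,a) := max{ T_AL Q(x,a), R(x,a) + γ E_{x'~P(·|x,a)} Q(x',a) } satisfies T_AL Q(x,a) ≤ T_PAL Q(x,a) ≤ TQ(x,a) pointwise; hence T_PAL satisfies both conditions of the main theorem. -/
/-- (Persistent advantage learning) For `α ∈ [0,1)`, the operator
`T_PAL Q(x,a) := max{T_AL Q(x,a), R(x,a) + γ E_{x'} Q(x',a)}` satisfies
`T_AL Q ≤ T_PAL Q ≤ TQ` pointwise; hence `T_PAL` satisfies both conditions of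
the main theorem. -/
theorem persistent_advantage_learning_satisfies_conditions
    {X A : Type*} [Fintype X] [Fintype A] [Nonempty X] [Nonempty A]
    (P : X → A → X → ℝ) (hP0 : ∀ x a x', 0 ≤ P x a x')
    (hP1 : ∀ x a, ∑ x', P x a x' = 1)
    (R : X → A → ℝ) (γ : ℝ) (hγ0 : 0 ≤ γ) (hγ1 : γ < 1)
    (T TAL TPAL : (X → A → ℝ) → (X → A → ℝ))
    (hT : ∀ Q x a, T Q x a = R x a + γ * ∑ x', P x a x' * (⨆ b, Q x' b))
    (α : ℝ) (hα0 : 0 ≤ α) (hα1 : α < 1)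
    (hTAL : ∀ Q x a, TAL Q x a = T Q x a - α * ((⨆ b, Q x b) - Q x a))
    (hTPAL : ∀ Q x a, TPAL Q x a =
      max (TAL Q x a) (R x a + γ * ∑ x', P x a x' * Q x' a)) :
    ∀ (Q : X → A → ℝ) (x : X) (a : A),
      TAL Q x a ≤ TPAL Q x a ∧ TPAL Q x a ≤ T Q x a := by
  intro Q x a
  have hle : ∀ (x' : X) (b : A), Q x' b ≤ ⨆ c, Q x' c := fun x' b =>
    le_ciSup (Set.Finite.bddAbove (Set.finite_range _)) b
  constructor
  · rw [hTPAL]; exact le_max_left _ _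
  · rw [hTPAL]
    apply max_le
    · rw [hTAL]
      have : 0 ≤ α * ((⨆ b, Q x b) - Q x a) :=
        mul_nonneg hα0 (sub_nonneg.mpr (hle x a))
      linarith
    · rw [hT]
      have : (∑ x', P x a x' * Q x' a) ≤ ∑ x', P x a x' * (⨆ b, Q x' b) :=
        Finset.sum_le_sum fun i _ => mul_le_mul_of_nonneg_left (hle i a) (hP0 x a i)
      nlinarith
end

section
/- (Lower bound propagation for value iterates) Under the conditions of Lemma 1, the iterates satisfy V_{k+1}(x) - V_k(x) ≥ γ^k · min_{x'} [V_1(x') - V_0(x')] for all x and k ≥ 1; in particular V_{k+1}(x) - V_k(x) ≥ -γ^k ‖V_1 - V_0‖∞. -/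
/-- (Lower bound propagation for value iterates) Under the conditions of
Lemma 1, for all `x` and `k ≥ 1`,
`V_{k+1}(x) - V_k(x) ≥ γ^k min_{x'} [V_1(x') - V_0(x')]`, and in particular
`V_{k+1}(x) - V_k(x) ≥ -γ^k max_{x'} |V_1(x') - V_0(x')|`. -/
theorem value_iterate_lower_bound
    {X A : Type*} [Fintype X] [Fintype A] [Nonempty X] [Nonempty A]
    (P : X → A → X → ℝ) (hP0 : ∀ x a x', 0 ≤ P x a x')
    (hP1 : ∀ x a, ∑ x', P x a x' = 1)
    (R : X → A → ℝ) (γ : ℝ) (hγ0 : 0 ≤ γ) (hγ1 : γ < 1)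
    (T T' : (X → A → ℝ) → (X → A → ℝ))
    (hT : ∀ Q x a, T Q x a = R x a + γ * ∑ x', P x a x' * (⨆ b, Q x' b))
    (h1 : ∀ Q x a, T' Q x a ≤ T Q x a)
    (h2 : ∀ (Q : X → A → ℝ) (x : X) (a : A), Q x a = (⨆ b, Q x b) → T' Q x a = T Q x a)
    (Q : ℕ → X → A → ℝ) (hQ : ∀ k, Q (k + 1) = T' (Q k)) :
    ∀ (x : X) (k : ℕ), 1 ≤ k →
      γ ^ k * (⨅ x', ((⨆ a, Q 1 x' a) - ⨆ a, Q 0 x' a)) ≤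
        (⨆ a, Q (k + 1) x a) - (⨆ a, Q k x a) ∧
      -(γ ^ k * ⨆ x', |(⨆ a, Q 1 x' a) - ⨆ a, Q 0 x' a|) ≤
        (⨆ a, Q (k + 1) x a) - (⨆ a, Q k x a) := by
  set V : ℕ → X → ℝ := fun k x => ⨆ a, Q k x a with hV
  have hVle : ∀ k x a, Q k x a ≤ V k x := fun k x a =>
    le_ciSup (Set.Finite.bddAbove (Set.finite_range _)) a
  have hVex : ∀ k x, ∃ a, Q k x a = V k x := by
    intro k x
    obtain ⟨a, ha⟩ := Finite.exists_max (Q k x)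
    exact ⟨a, le_antisymm (hVle k x a) (ciSup_le ha)⟩
  set m : ℝ := ⨅ x', (V 1 x' - V 0 x') with hm
  have hmle : ∀ x', m ≤ V 1 x' - V 0 x' := fun x' =>
    ciInf_le (Set.Finite.bddBelow (Set.finite_range _)) x'
  -- main induction
  have main : ∀ k x, γ ^ k * m ≤ V (k + 1) x - V k x := by
    intro k
    induction k with
    | zero => intro x; simpa using hmle x
    | succ k ih =>
      intro x
      obtain ⟨a, ha⟩ := hVex (k + 1) x
      have hTeq : T' (Q (k + 1)) x a = T (Q (k + 1)) x a := h2 _ x a ha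
      have h3 : V (k + 2) x ≥ T (Q (k + 1)) x a := by
        rw [← hTeq, ← hQ (k + 1)]
        exact hVle (k + 2) x a
      have h4 : V (k + 1) x ≤ T (Q k) x a := by
        rw [← ha, hQ k]
        exact h1 (Q k) x a
      have h5 : T (Q (k + 1)) x a - T (Q k) x a
          = γ * ∑ x', P x a x' * (V (k + 1) x' - V k x') := by
        simp only [hT, hV, mul_sub, Finset.sum_sub_distrib]
        ring
      have h6 : γ ^ k * m ≤ ∑ x', P x a x' * (V (k + 1) x' - V k x') := by
        calc γ ^ k * m = ∑ x', P x a x' * (γ ^ k * m) := by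
              rw [← Finset.sum_mul, hP1, one_mul]
          _ ≤ _ := by
              apply Finset.sum_le_sum
              intro x' _
              exact mul_le_mul_of_nonneg_left (ih x') (hP0 x a x')
      have : γ ^ (k + 1) * m ≤ T (Q (k + 1)) x a - T (Q k) x a := by
        rw [h5, pow_succ, mul_comm (γ ^ k) γ, mul_assoc]
        exact mul_le_mul_of_nonneg_left h6 hγ0
      linarith
  intro x k _
  refine ⟨main k x, ?_⟩
  have hS : -(⨆ x', |V 1 x' - V 0 x'|) ≤ m := by
    apply le_ciInf
    intro x'
    have h1' : |V 1 x' - V 0 x'| ≤ ⨆ x', |V 1 x' - V 0 x'| :=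
      le_ciSup (f := fun x' => |V 1 x' - V 0 x'|)
        (Set.Finite.bddAbove (Set.finite_range _)) x'
    have := neg_abs_le (V 1 x' - V 0 x')
    linarith
  have : γ ^ k * -(⨆ x', |V 1 x' - V 0 x'|) ≤ γ ^ k * m :=
    mul_le_mul_of_nonneg_left hS (pow_nonneg hγ0 k)
  calc -(γ ^ k * ⨆ x', |V 1 x' - V 0 x'|)
      = γ ^ k * -(⨆ x', |V 1 x' - V 0 x'|) := by ring
    _ ≤ γ ^ k * m := this
    _ ≤ _ := main k x
end
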